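/- With the same notation (nonnegative r ∈ ℓ²(2ℤ), n ≥ 4, ρ̃_n = E_n(r) + 2‖r‖/√n, and σ₁(n,s;m) the s-fold weighted convolution sum), for every p ≥ 1 and every m ∈ n + 2ℤ one has σ₁(n,2p;m) ≤ (2‖r‖ρ̃_n)^p and σ₁(n,2p+1;m) ≤ ‖r‖·(2‖r‖ρ̃_n)^p. -/

import Mathlib

/-- The `s`-fold weighted convolution sum
`σ₁(n,s;m) = ∑_{j₁,…,j_s ≠ n, j_ν ∈ n+2ℤ} ∏_ν r(j_{ν-1}+j_ν)/|n-j_ν|` with `j₀ = m`. -/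
noncomputable def sigma1 (r : ℤ → ℝ) (n : ℤ) : ℕ → ℤ → ℝ
  | 0, _ => 1
  | s + 1, m =>
      ∑' j : {j : ℤ // j % 2 = n % 2 ∧ j ≠ n},
        r (m + j.1) / |(n : ℝ) - (j.1 : ℝ)| * sigma1 r n s j.1

/-!
Each step is a Cauchy–Schwarz estimate: over `j ∈ n + 2ℤ, j ≠ n` the weights `|n - j|⁻¹` have
square sum `π²/12 ≤ 1`, so `σ₁(n,1;m) ≤ ‖r‖`, and those with `|n - j| > n/2` have square sum at
most `4/n`. In `σ₁(n,2;m)`, if both indices `j, k` lie within `n/2` of `n` then `|j + k| ≥ n`, so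
these terms only see the tail of `r` and give at most `‖r‖ E_n(r)`; a far outer or a far inner index
gives at most `2‖r‖²/√n` each. Hence `σ₁(n,2;m) ≤ 2‖r‖ρ̃_n`, and as
`σ₁(n,s+2;m) ≤ (sup_k σ₁(n,s;k)) · σ₁(n,2;m)`, induction on `p` finishes the proof.
-/
open Real Finset

theorem summable_and_tsum_mul_le_sqrt_mul_sqrt {ι : Type*} {f g : ι → ℝ}
    (hf : ∀ i, 0 ≤ f i) (hg : ∀ i, 0 ≤ g i)
    (hf2 : Summable fun i => f i ^ 2) (hg2 : Summable fun i => g i ^ 2) :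
    Summable (fun i => f i * g i) ∧
      ∑' i, f i * g i ≤ √(∑' i, f i ^ 2) * √(∑' i, g i ^ 2) := by
  have := Real.summable_and_inner_le_Lp_mul_Lq_tsum_of_nonneg Real.HolderConjugate.two_two
    hf hg (by simpa using hf2) (by simpa using hg2)
  simpa [sqrt_eq_rpow] using this

noncomputable def invSqFrom (L i : ℕ) : ℝ := if L ≤ i then ((i : ℝ) ^ 2)⁻¹ else 0

lemma invSqFrom_nonneg (L i : ℕ) : 0 ≤ invSqFrom L i := by
  unfold invSqFrom; split_ifs <;> positivity

lemma summable_invSqFrom (L : ℕ) : Summable (invSqFrom L) :=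
  (summable_nat_pow_inv.2 one_lt_two).of_nonneg_of_le (invSqFrom_nonneg L) fun i => by
    unfold invSqFrom; split_ifs <;> simp

lemma tsum_invSqFrom_le {L : ℕ} (hL : 1 ≤ L) : ∑' i, invSqFrom L i ≤ 2 / L := by
  refine Real.tsum_le_of_sum_range_le (invSqFrom_nonneg L) fun N => ?_
  calc ∑ i ∈ range N, invSqFrom L i = ∑ i ∈ (range N).filter (L ≤ ·), ((i : ℝ) ^ 2)⁻¹ :=
        (sum_filter _ _).symm
    _ ≤ ∑ i ∈ Ioo (L - 1) N, ((i : ℝ) ^ 2)⁻¹ :=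
        sum_le_sum_of_subset_of_nonneg (fun i hi => by simp at hi ⊢; omega)
          fun _ _ _ => inv_nonneg.2 (sq_nonneg _)
    _ ≤ 2 / ((L - 1 : ℕ) + 1 : ℝ) := sum_Ioo_inv_sq_le _ _
    _ = 2 / L := by rw [Nat.cast_sub hL]; ring_nf

abbrev SigmaIndex (n : ℤ) := {j : ℤ // j % 2 = n % 2 ∧ j ≠ n}

def sigmaIndexEquiv (n : ℤ) : Bool × ℕ ≃ SigmaIndex n where
  toFun x := ⟨n + (if x.1 then 2 else -2) * (x.2 + 1), by
    rcases x with ⟨_ | _, _⟩ <;> simp <;> omega⟩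
  invFun j := (decide (n < j.1), (n - j.1).natAbs / 2 - 1)
  left_inv := by rintro ⟨_ | _, _⟩ <;> simp <;> omega
  right_inv := by
    rintro ⟨j, hpar, hne⟩
    ext
    by_cases h : n < j <;> simp [h] <;> omega

lemma abs_sub_sigmaIndexEquiv (n : ℤ) (x : Bool × ℕ) :
    |n - (sigmaIndexEquiv n x : ℤ)| = 2 * (x.2 + 1) := by
  rcases x with ⟨_ | _, _⟩ <;> simp [sigmaIndexEquiv] <;> omega

noncomputable def invDistCutoff (n : ℤ) (L : ℕ) (j : SigmaIndex n) : ℝ :=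
  if 2 * L ≤ |n - j| then |(n : ℝ) - j|⁻¹ else 0

lemma invDistCutoff_nonneg (n : ℤ) (L : ℕ) (j : SigmaIndex n) : 0 ≤ invDistCutoff n L j := by
  unfold invDistCutoff; split_ifs <;> positivity

lemma invDistCutoff_of_le {n : ℤ} {L : ℕ} {j : SigmaIndex n} (hj : 2 * (L : ℤ) ≤ |n - j|) :
    invDistCutoff n L j = |(n : ℝ) - j|⁻¹ :=
  if_pos hj

lemma invDistCutoff_of_lt {n : ℤ} {L : ℕ} {j : SigmaIndex n} (hj : |n - j| < 2 * (L : ℤ)) :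
    invDistCutoff n L j = 0 :=
  if_neg hj.not_ge

lemma invDistCutoff_sq_sigmaIndexEquiv (n : ℤ) (L : ℕ) (x : Bool × ℕ) :
    invDistCutoff n L (sigmaIndexEquiv n x) ^ 2 = 4⁻¹ * invSqFrom L (x.2 + 1) := by
  have habs := abs_sub_sigmaIndexEquiv n x
  have habsR : |(n : ℝ) - (sigmaIndexEquiv n x : ℤ)| = 2 * ((x.2 + 1 : ℕ) : ℝ) := by
    exact_mod_cast habs
  unfold invDistCutoff invSqFrom
  rw [habs, habsR]
  split_ifs
  · push_cast; field_simp; ring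
  · omega
  · omega
  · simp

theorem summable_and_tsum_invDistCutoff_sq_le (n : ℤ) {L : ℕ} (hL : 1 ≤ L) :
    Summable (fun j => invDistCutoff n L j ^ 2) ∧ ∑' j, invDistCutoff n L j ^ 2 ≤ 1 / L := by
  have hshift : Summable fun a : ℕ => invSqFrom L (a + 1) :=
    (summable_nat_add_iff 1).2 (summable_invSqFrom L)
  have hprod : Summable fun x : Bool × ℕ => 4⁻¹ * invSqFrom L (x.2 + 1) :=
    (summable_prod_of_nonneg fun x => by have := invSqFrom_nonneg L (x.2 + 1); positivity).2
      ⟨fun _ => hshift.mul_left _, Summable.of_finite⟩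
  rw [← (sigmaIndexEquiv n).summable_iff, ← (sigmaIndexEquiv n).tsum_eq]
  simp only [Function.comp_def, invDistCutoff_sq_sigmaIndexEquiv]
  refine ⟨hprod, ?_⟩
  have htail := tsum_invSqFrom_le hL
  rw [(summable_invSqFrom L).tsum_eq_zero_add, invSqFrom, if_neg (by omega), zero_add] at htail
  rw [hprod.tsum_prod, tsum_fintype, Fintype.sum_bool, tsum_mul_left]
  calc 4⁻¹ * ∑' a, invSqFrom L (a + 1) + 4⁻¹ * ∑' a, invSqFrom L (a + 1)
      ≤ 4⁻¹ * (2 / L) + 4⁻¹ * (2 / L) := by gcongr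
    _ = 1 / L := by ring

noncomputable def normL2 (f : ℤ → ℝ) : ℝ := √(∑' k, f k ^ 2)

noncomputable def tailNormL2 (f : ℤ → ℝ) (n : ℤ) : ℝ :=
  √(∑' k : {k : ℤ // n ≤ |k|}, f k.1 ^ 2)

noncomputable def rhoTilde (f : ℤ → ℝ) (n : ℤ) : ℝ := tailNormL2 f n + 2 * normL2 f / √n

lemma normL2_nonneg (f : ℤ → ℝ) : 0 ≤ normL2 f := sqrt_nonneg _

lemma tailNormL2_nonneg (f : ℤ → ℝ) (n : ℤ) : 0 ≤ tailNormL2 f n := sqrt_nonneg _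

lemma normL2_indicator (f : ℤ → ℝ) (n : ℤ) :
    normL2 ({k | n ≤ |k|}.indicator f) = tailNormL2 f n := by
  rw [normL2, tailNormL2]
  congr 1
  refine (tsum_congr fun k => ?_).trans (tsum_subtype {k : ℤ | n ≤ |k|} fun k => f k ^ 2).symm
  by_cases hk : n ≤ |k| <;> simp [hk]

theorem summable_and_tsum_mul_invDistCutoff_le {f : ℤ → ℝ} (hf : ∀ k, 0 ≤ f k)
    (hf2 : Summable fun k => f k ^ 2) (n a : ℤ) {L : ℕ} (hL : 1 ≤ L) :
    Summable (fun j : SigmaIndex n => f (a + j) * invDistCutoff n L j) ∧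
      ∑' j : SigmaIndex n, f (a + j) * invDistCutoff n L j ≤ normL2 f / √L := by
  have hshift : Function.Injective fun j : SigmaIndex n => a + j :=
    fun i j h => Subtype.ext (add_left_cancel h)
  obtain ⟨hinv, hinv_le⟩ := summable_and_tsum_invDistCutoff_sq_le n hL
  obtain ⟨hsum, hle⟩ := summable_and_tsum_mul_le_sqrt_mul_sqrt
    (f := fun j : SigmaIndex n => f (a + j)) (fun j => hf (a + j))
    (invDistCutoff_nonneg n L) (hf2.comp_injective hshift) hinv
  refine ⟨hsum, hle.trans ?_⟩
  rw [div_eq_mul_inv, ← Real.sqrt_inv, ← one_div]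
  exact mul_le_mul (sqrt_le_sqrt (tsum_comp_le_tsum_of_inj hf2 (fun _ => sq_nonneg _) hshift))
    (sqrt_le_sqrt hinv_le) (sqrt_nonneg _) (normL2_nonneg f)

noncomputable def sigmaWeight (r : ℤ → ℝ) (n m : ℤ) (j : SigmaIndex n) : ℝ :=
  r (m + j) / |(n : ℝ) - j|

section SigmaBounds

variable {r : ℤ → ℝ} {n : ℤ}

lemma sigma1_succ (s : ℕ) (m : ℤ) :
    sigma1 r n (s + 1) m = ∑' j, sigmaWeight r n m j * sigma1 r n s j := rfl

lemma sigma1_one (m : ℤ) : sigma1 r n 1 m = ∑' j, sigmaWeight r n m j :=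
  tsum_congr fun _ => mul_one _

lemma sigmaWeight_nonneg (hr : ∀ k, 0 ≤ r k) (m : ℤ) (j : SigmaIndex n) :
    0 ≤ sigmaWeight r n m j :=
  div_nonneg (hr _) (abs_nonneg _)

lemma sigmaWeight_eq_mul_invDistCutoff (m : ℤ) (j : SigmaIndex n) :
    sigmaWeight r n m j = r (m + j) * invDistCutoff n 1 j := by
  have : 2 * ((1 : ℕ) : ℤ) ≤ |n - j| := by
    have := j.2.1; have := j.2.2; rw [Int.abs_eq_natAbs]; omega
  rw [sigmaWeight, invDistCutoff_of_le this, div_eq_mul_inv]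

lemma summable_and_tsum_sigmaWeight_le (hr : ∀ k, 0 ≤ r k) (hr2 : Summable fun k => r k ^ 2)
    (m : ℤ) : Summable (sigmaWeight r n m) ∧ ∑' j, sigmaWeight r n m j ≤ normL2 r := by
  simp only [funext (sigmaWeight_eq_mul_invDistCutoff (r := r) m)]
  simpa using summable_and_tsum_mul_invDistCutoff_le hr hr2 n m le_rfl

lemma summable_sigmaWeight_mul (hr : ∀ k, 0 ≤ r k) (hr2 : Summable fun k => r k ^ 2)
    (m : ℤ) {g : SigmaIndex n → ℝ} {M : ℝ} (hg : ∀ j, 0 ≤ g j) (hgM : ∀ j, g j ≤ M) :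
    Summable fun j => sigmaWeight r n m j * g j :=
  ((summable_and_tsum_sigmaWeight_le hr hr2 m).1.mul_right M).of_nonneg_of_le
    (fun j => mul_nonneg (sigmaWeight_nonneg hr m j) (hg j))
    (fun j => mul_le_mul_of_nonneg_left (hgM j) (sigmaWeight_nonneg hr m j))

lemma sigma1_nonneg (hr : ∀ k, 0 ≤ r k) (s : ℕ) (m : ℤ) : 0 ≤ sigma1 r n s m := by
  induction s generalizing m with
  | zero => exact zero_le_one
  | succ s ih => exact tsum_nonneg fun j => mul_nonneg (sigmaWeight_nonneg hr m j) (ih j)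

lemma sigma1_le_pow (hr : ∀ k, 0 ≤ r k) (hr2 : Summable fun k => r k ^ 2) (s : ℕ) (m : ℤ) :
    sigma1 r n s m ≤ normL2 r ^ s := by
  induction s generalizing m with
  | zero => exact le_rfl
  | succ s ih =>
    obtain ⟨hw, hw_le⟩ := summable_and_tsum_sigmaWeight_le (n := n) hr hr2 m
    calc sigma1 r n (s + 1) m ≤ ∑' j, sigmaWeight r n m j * normL2 r ^ s :=
          (summable_sigmaWeight_mul hr hr2 m (fun j => sigma1_nonneg hr s j)
            fun j => ih j).tsum_le_tsum
            (fun j => mul_le_mul_of_nonneg_left (ih j) (sigmaWeight_nonneg hr m j))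
            (hw.mul_right _)
      _ ≤ normL2 r * normL2 r ^ s := by
          have := normL2_nonneg r
          rw [tsum_mul_right]; gcongr
      _ = normL2 r ^ (s + 1) := (pow_succ' _ _).symm

lemma sigma1_succ_le_mul (hr : ∀ k, 0 ≤ r k) (hr2 : Summable fun k => r k ^ 2)
    {s t : ℕ} {C : ℝ} (h : ∀ k, sigma1 r n s k ≤ C * sigma1 r n t k) (m : ℤ) :
    sigma1 r n (s + 1) m ≤ C * sigma1 r n (t + 1) m := by
  rw [sigma1_succ, sigma1_succ, ← tsum_mul_left]
  refine Summable.tsum_le_tsum (fun j => ?_)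
    (summable_sigmaWeight_mul hr hr2 m (fun j => sigma1_nonneg hr s j)
      fun j => sigma1_le_pow hr hr2 s j)
    ((summable_sigmaWeight_mul hr hr2 m (fun j => sigma1_nonneg hr t j)
      fun j => sigma1_le_pow hr hr2 t j).mul_left C)
  rw [mul_left_comm]
  exact mul_le_mul_of_nonneg_left (h j) (sigmaWeight_nonneg hr m j)

lemma sigma1_add_two_le_mul (hr : ∀ k, 0 ≤ r k) (hr2 : Summable fun k => r k ^ 2)
    {s : ℕ} {C : ℝ} (h : ∀ k, sigma1 r n s k ≤ C) (m : ℤ) :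
    sigma1 r n (s + 2) m ≤ C * sigma1 r n 2 m :=
  sigma1_succ_le_mul hr hr2
    (sigma1_succ_le_mul hr hr2 (t := 0) fun k => (h k).trans_eq (mul_one C).symm) m

lemma sigma1_add_two_mul_le (hr : ∀ k, 0 ≤ r k) (hr2 : Summable fun k => r k ^ 2)
    {B C : ℝ} (hB : ∀ k, sigma1 r n 2 k ≤ B) {t : ℕ}
    (ht : ∀ k, sigma1 r n t k ≤ C) (p : ℕ) (m : ℤ) :
    sigma1 r n (2 * p + t) m ≤ C * B ^ p := by
  have hB0 : 0 ≤ B := (sigma1_nonneg hr 2 0).trans (hB 0)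
  have hC0 : 0 ≤ C := (sigma1_nonneg hr t 0).trans (ht 0)
  induction p generalizing m with
  | zero => simpa using ht m
  | succ p ih =>
    rw [show 2 * (p + 1) + t = 2 * p + t + 2 by ring]
    calc sigma1 r n (2 * p + t + 2) m ≤ C * B ^ p * sigma1 r n 2 m :=
          sigma1_add_two_le_mul hr hr2 ih m
      _ ≤ C * B ^ (p + 1) := by rw [pow_succ, ← mul_assoc]; gcongr; exact hB m

lemma sigma1_one_le_of_near (hr : ∀ k, 0 ≤ r k) (hr2 : Summable fun k => r k ^ 2)
    {L : ℕ} (hL : 1 ≤ L) (hLn : 4 * (L : ℤ) ≤ n + 4) (j : SigmaIndex n) (hj : |n - j| < 2 * L) :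
    sigma1 r n 1 j ≤ tailNormL2 r n + normL2 r / √L := by
  set tail := {k : ℤ | n ≤ |k|}.indicator r
  have htail2 : Summable fun k => tail k ^ 2 :=
    hr2.of_nonneg_of_le (fun _ => sq_nonneg _) fun k => by
      by_cases hk : n ≤ |k| <;> simp [tail, hk, sq_nonneg]
  obtain ⟨hT, hT_le⟩ := summable_and_tsum_mul_invDistCutoff_le
    (Set.indicator_nonneg fun k _ => hr k) htail2 n j le_rfl
  obtain ⟨hF, hF_le⟩ := summable_and_tsum_mul_invDistCutoff_le hr hr2 n j hL
  have hsplit : ∀ k, sigmaWeight r n j k ≤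
      tail (j + k) * invDistCutoff n 1 k + r (j + k) * invDistCutoff n L k := by
    intro k
    by_cases hk : 2 * (L : ℤ) ≤ |n - k|
    · rw [sigmaWeight, invDistCutoff_of_le hk, ← div_eq_mul_inv]
      exact le_add_of_nonneg_left
        (mul_nonneg (Set.indicator_nonneg (fun k _ => hr k) _) (invDistCutoff_nonneg n 1 k))
    · -- both indices lie within `n/2` of `n`, so `j + k` lies in the tail `|·| ≥ n`
      have hjk : n ≤ |(j : ℤ) + k| := by
        have := j.2.1; have := k.2.1
        rw [Int.abs_eq_natAbs] at hj hk ⊢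
        omega
      rw [sigmaWeight_eq_mul_invDistCutoff, show tail (j + k) = r (j + k) from
        Set.indicator_of_mem (s := {k : ℤ | n ≤ |k|}) hjk r, invDistCutoff_of_lt (not_le.1 hk),
        mul_zero, add_zero]
  rw [sigma1_one]
  calc ∑' k, sigmaWeight r n j k
      ≤ ∑' k : SigmaIndex n,
          (tail (j + k) * invDistCutoff n 1 k + r (j + k) * invDistCutoff n L k) :=
        (summable_and_tsum_sigmaWeight_le hr hr2 j).1.tsum_le_tsum hsplit (hT.add hF)
    _ = ∑' k : SigmaIndex n, tail (j + k) * invDistCutoff n 1 k +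
          ∑' k : SigmaIndex n, r (j + k) * invDistCutoff n L k :=
        hT.tsum_add hF
    _ ≤ normL2 tail / √(1 : ℕ) + normL2 r / √L := add_le_add hT_le hF_le
    _ = tailNormL2 r n + normL2 r / √L := by
        rw [normL2_indicator, Nat.cast_one, sqrt_one, div_one]

lemma sigma1_two_le (hr : ∀ k, 0 ≤ r k) (hr2 : Summable fun k => r k ^ 2)
    {L : ℕ} (hL : 1 ≤ L) (hLn : 4 * (L : ℤ) ≤ n + 4) (m : ℤ) :
    sigma1 r n 2 m ≤ normL2 r * (tailNormL2 r n + 2 * normL2 r / √L) := by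
  set A := tailNormL2 r n + normL2 r / √L
  obtain ⟨hw, hw_le⟩ := summable_and_tsum_sigmaWeight_le (n := n) hr hr2 m
  obtain ⟨hF, hF_le⟩ := summable_and_tsum_mul_invDistCutoff_le hr hr2 n m hL
  have hA : 0 ≤ A :=
    add_nonneg (tailNormL2_nonneg r n) (div_nonneg (normL2_nonneg r) (sqrt_nonneg _))
  have hsplit : ∀ j, sigmaWeight r n m j * sigma1 r n 1 j ≤
      A * sigmaWeight r n m j + normL2 r * (r (m + j) * invDistCutoff n L j) := by
    intro j
    have hw0 := sigmaWeight_nonneg hr m j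
    by_cases hj : 2 * (L : ℤ) ≤ |n - j|
    · rw [invDistCutoff_of_le hj, ← div_eq_mul_inv, ← sigmaWeight]
      have := (sigma1_le_pow (n := n) hr hr2 1 j).trans_eq (pow_one _)
      nlinarith
    · rw [invDistCutoff_of_lt (not_le.1 hj), mul_zero, mul_zero, add_zero, mul_comm]
      exact mul_le_mul_of_nonneg_right (sigma1_one_le_of_near hr hr2 hL hLn j (not_le.1 hj)) hw0
  calc sigma1 r n 2 m = ∑' j, sigmaWeight r n m j * sigma1 r n 1 j := sigma1_succ 1 m
    _ ≤ ∑' j : SigmaIndex n,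
          (A * sigmaWeight r n m j + normL2 r * (r (m + j) * invDistCutoff n L j)) :=
        (summable_sigmaWeight_mul hr hr2 m (fun j => sigma1_nonneg hr 1 j)
          fun j => sigma1_le_pow hr hr2 1 j).tsum_le_tsum
          hsplit ((hw.mul_left A).add (hF.mul_left _))
    _ = A * ∑' j, sigmaWeight r n m j +
          normL2 r * ∑' j : SigmaIndex n, r (m + j) * invDistCutoff n L j := by
        rw [(hw.mul_left A).tsum_add (hF.mul_left _), tsum_mul_left, tsum_mul_left]
    _ ≤ A * normL2 r + normL2 r * (normL2 r / √L) := by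
        have := normL2_nonneg r
        gcongr
    _ = normL2 r * (tailNormL2 r n + 2 * normL2 r / √L) := by ring

lemma sigma1_two_le_rhoTilde (hr : ∀ k, 0 ≤ r k) (hr2 : Summable fun k => r k ^ 2)
    (hn : 0 < n) (m : ℤ) : sigma1 r n 2 m ≤ 2 * normL2 r * rhoTilde r n := by
  set L := n.toNat / 4 + 1
  have hnL : (n : ℝ) ≤ 4 * L := by exact_mod_cast (by omega : n ≤ 4 * (L : ℤ))
  have hsqrt : 1 / √L ≤ 2 / √n := by
    rw [div_le_div_iff₀ (by positivity) (by positivity), one_mul]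
    calc √n ≤ √(2 ^ 2 * L) := sqrt_le_sqrt (by linarith)
      _ = 2 * √L := by rw [sqrt_mul (by norm_num), sqrt_sq (by norm_num)]
  have hE := tailNormL2_nonneg r n
  have hR := normL2_nonneg r
  calc sigma1 r n 2 m ≤ normL2 r * (tailNormL2 r n + 2 * normL2 r / √L) :=
        sigma1_two_le hr hr2 (by omega) (by omega) m
    _ = normL2 r * tailNormL2 r n + 2 * normL2 r ^ 2 * (1 / √L) := by ring
    _ ≤ 2 * normL2 r * tailNormL2 r n + 2 * normL2 r ^ 2 * (2 / √n) := by
        refine add_le_add (by nlinarith) ?_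
        gcongr
    _ = 2 * normL2 r * rhoTilde r n := by rw [rhoTilde]; ring

end SigmaBounds

theorem stmt6_general (r : ℤ → ℝ) (hr : ∀ m, 0 ≤ r m) (hsum : Summable fun m => (r m) ^ 2)
    (n : ℕ) (hn : 4 ≤ n) (p : ℕ) (m : ℤ) :
    sigma1 r (n : ℤ) (2 * p) m ≤
      (2 * Real.sqrt (∑' k : ℤ, (r k) ^ 2) *
        (Real.sqrt (∑' k : {k : ℤ // (n : ℤ) ≤ |k|}, (r k.1) ^ 2) +
          2 * Real.sqrt (∑' k : ℤ, (r k) ^ 2) / Real.sqrt n)) ^ p ∧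
    sigma1 r (n : ℤ) (2 * p + 1) m ≤
      Real.sqrt (∑' k : ℤ, (r k) ^ 2) *
        (2 * Real.sqrt (∑' k : ℤ, (r k) ^ 2) *
          (Real.sqrt (∑' k : {k : ℤ // (n : ℤ) ≤ |k|}, (r k.1) ^ 2) +
            2 * Real.sqrt (∑' k : ℤ, (r k) ^ 2) / Real.sqrt n)) ^ p := by
  have hB := sigma1_two_le_rhoTilde hr hsum (n := n) (by omega)
  have heven := sigma1_add_two_mul_le hr hsum hB (t := 0) (C := 1) (fun _ => le_rfl) p m
  have hodd := sigma1_add_two_mul_le hr hsum hB (t := 1)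
    (fun k => (sigma1_le_pow hr hsum 1 k).trans_eq (pow_one _)) p m
  simp only [rhoTilde, Int.cast_natCast, add_zero, one_mul] at heven hodd
  exact ⟨heven, hodd⟩

/-- `σ₁(n,2p;m) ≤ (2‖r‖ρ̃_n)^p` and `σ₁(n,2p+1;m) ≤ ‖r‖·(2‖r‖ρ̃_n)^p`
where `ρ̃_n = E_n(r) + 2‖r‖/√n`. -/
theorem stmt6 (r : ℤ → ℝ) (hr : ∀ m, 0 ≤ r m) (hsum : Summable fun m => (r m) ^ 2)
    (n : ℕ) (hn : 4 ≤ n) (p : ℕ) (hp : 1 ≤ p) (m : ℤ) (hm : m % 2 = (n : ℤ) % 2) :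
    sigma1 r (n : ℤ) (2 * p) m ≤
      (2 * Real.sqrt (∑' k : ℤ, (r k) ^ 2) *
        (Real.sqrt (∑' k : {k : ℤ // (n : ℤ) ≤ |k|}, (r k.1) ^ 2) +
          2 * Real.sqrt (∑' k : ℤ, (r k) ^ 2) / Real.sqrt n)) ^ p ∧
    sigma1 r (n : ℤ) (2 * p + 1) m ≤
      Real.sqrt (∑' k : ℤ, (r k) ^ 2) *
        (2 * Real.sqrt (∑' k : ℤ, (r k) ^ 2) *
          (Real.sqrt (∑' k : {k : ℤ // (n : ℤ) ≤ |k|}, (r k.1) ^ 2) +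
            2 * Real.sqrt (∑' k : ℤ, (r k) ^ 2) / Real.sqrt n)) ^ p :=
  stmt6_general r hr hsum n hn p m
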